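/- Let f : ℝ → ℝ be a convex function of class C¹ which is coercive (f(x) → +∞ as |x| → ∞) and attains its minimum exactly on a segment [a,b] with a < b (i.e., argmin f = [a,b]). Let 2 ≤ p < 3 and let x : [0,∞) → ℝ be a twice continuously differentiable solution of ẍ(t) + |ẋ(t)|^{p−2} ẋ(t) + f′(x(t)) = 0 on [0,∞). Then x(t) converges as t → ∞, and its limit belongs to [a,b]. -/

import Mathlib

/-!
The mechanical energy `E = f(x) + ẋ²/2` decreases at rate `|ẋ|^p`. Hence it converges, and by
coercivity `x`, `ẋ` and then `ẍ` are bounded. Since `E(t) - E(t + δ) → 0` while a velocity of size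
`ε` persists (as `ẍ` is bounded) long enough to dissipate a fixed amount, `ẋ → 0`. So `f(x(t))`
converges to the limit energy, and this is `min f`: otherwise `x` would eventually stay on one side
of `[a, b]`, where the slope of the convex `f` is bounded away from `0` and drives `ẋ` away from
`0`. Thus every cluster point of `x` lies in `[a, b]`. On `[a, b]` the motion is free,
`ẍ = -|ẋ|^{p-2} ẋ`, and `x + |ẋ|^{3-p}/(3-p)` does not increase; as `p < 3`, a late crossing of
`[c, d] ⊆ [a, b]` covers a distance at most `|ẋ|^{3-p}/(3-p) → 0`, so `x` cannot oscillate.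
-/

open Set Filter Topology

noncomputable section

theorem Convex.image_sub_le_mul_sub_of_hasDerivWithinAt_le {D : Set ℝ} (hD : Convex ℝ D)
    {g g' : ℝ → ℝ} {C : ℝ} (hg : ∀ t ∈ D, HasDerivWithinAt g (g' t) D t)
    (hle : ∀ t ∈ interior D, g' t ≤ C) {t u : ℝ} (ht : t ∈ D) (hu : u ∈ D) (htu : t ≤ u) :
    g u - g t ≤ C * (u - t) := by
  have hint : ∀ s ∈ interior D, HasDerivAt g (g' s) s := fun s hs =>
    (hg s (interior_subset hs)).hasDerivAt (mem_interior_iff_mem_nhds.1 hs)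
  refine hD.image_sub_le_mul_sub_of_deriv_le (fun s hs => (hg s hs).continuousWithinAt)
    (fun s hs => (hint s hs).differentiableAt.differentiableWithinAt) (fun s hs => ?_) t ht u hu htu
  rw [(hint s hs).deriv]
  exact hle s hs

theorem Convex.antitoneOn_of_hasDerivWithinAt_nonpos {D : Set ℝ} (hD : Convex ℝ D)
    {g g' : ℝ → ℝ} (hg : ∀ t ∈ D, HasDerivWithinAt g (g' t) D t)
    (hle : ∀ t ∈ interior D, g' t ≤ 0) : AntitoneOn g D := fun t ht u hu htu => by
  simpa using hD.image_sub_le_mul_sub_of_hasDerivWithinAt_le hg hle ht hu htu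

theorem exists_tendsto_of_antitoneOn_Ici {g : ℝ → ℝ} {T m : ℝ} (hg : AntitoneOn g (Ici T))
    (hm : ∀ t ∈ Ici T, m ≤ g t) : ∃ e, Tendsto g atTop (𝓝 e) := by
  have hanti : Antitone fun t => g (max t T) := fun t u htu =>
    hg (le_max_right t T) (le_max_right u T) (max_le_max htu le_rfl)
  have hbdd : BddBelow (range fun t => g (max t T)) :=
    ⟨m, by rintro _ ⟨t, rfl⟩; exact hm _ (le_max_right t T)⟩
  refine ⟨_, (tendsto_atTop_ciInf hanti hbdd).congr' ?_⟩
  filter_upwards [eventually_ge_atTop T] with t ht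
  rw [max_eq_left ht]

theorem ConvexOn.sub_le_deriv_mul_sub {S : Set ℝ} {f : ℝ → ℝ} (hf : ConvexOn ℝ S f) {y z : ℝ}
    (hy : y ∈ S) (hz : z ∈ S) (hfy : DifferentiableAt ℝ f y) :
    f y - f z ≤ deriv f y * (y - z) := by
  rcases lt_trichotomy y z with hyz | rfl | hzy
  · have := hf.deriv_le_slope hy hz hyz hfy
    rw [slope_def_field, le_div_iff₀ (sub_pos.2 hyz)] at this
    linarith
  · simp
  · have := hf.slope_le_deriv hz hy hzy hfy
    rw [slope_def_field, div_le_iff₀ (sub_pos.2 hzy)] at this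
    linarith

theorem isBounded_setOf_le_of_tendsto_cocompact {X : Type*} [PseudoMetricSpace X]
    {f : X → ℝ} (hf : Tendsto f (cocompact X) atTop) (C : ℝ) :
    Bornology.IsBounded {y | f y ≤ C} := by
  obtain ⟨K, hK, hKc⟩ := mem_cocompact.1 (hf.eventually (eventually_gt_atTop C))
  exact hK.isBounded.subset fun y (hy : f y ≤ C) =>
    by_contra fun hyK => absurd hy (not_le.2 (hKc hyK : C < f y))

theorem exists_crossing {u : ℝ → ℝ} {s₁ s₂ c d : ℝ} (hs : s₁ ≤ s₂)
    (hu : ContinuousOn u (Icc s₁ s₂)) (hcd : c < d) (h₁ : u s₁ < c) (h₂ : d < u s₂) :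
    ∃ s s', s₁ ≤ s ∧ s < s' ∧ u s = c ∧ u s' = d ∧ ∀ t ∈ Ico s s', u t ∈ Ico c d := by
  set S' := {t ∈ Icc s₁ s₂ | d ≤ u t}
  have hS' : IsClosed S' := hu.preimage_isClosed_of_isClosed isClosed_Icc isClosed_Ici
  have hbdd' : BddBelow S' := ⟨s₁, fun t ht => ht.1.1⟩
  have hs'S' : sInf S' ∈ S' := hS'.csInf_mem ⟨s₂, ⟨hs, le_rfl⟩, h₂.le⟩ hbdd'
  set s' := sInf S'
  have hbefore : ∀ t ∈ Icc s₁ s₂, t < s' → u t < d := fun t ht hts' =>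
    lt_of_not_ge fun hdt => (csInf_le hbdd' ⟨ht, hdt⟩).not_gt hts'
  have hus' : u s' = d := by
    obtain ⟨r, hr, hur⟩ := intermediate_value_Icc hs'S'.1.1
      (hu.mono (Icc_subset_Icc le_rfl hs'S'.1.2)) ⟨h₁.le.trans hcd.le, hs'S'.2⟩
    have hs'r : s' ≤ r :=
      csInf_le hbdd' ⟨⟨hr.1, hr.2.trans hs'S'.1.2⟩, hur.ge⟩
    rwa [le_antisymm hr.2 hs'r] at hur
  set S := {t ∈ Icc s₁ s' | u t ≤ c}
  have hS : IsClosed S :=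
    (hu.mono (Icc_subset_Icc le_rfl hs'S'.1.2)).preimage_isClosed_of_isClosed isClosed_Icc
      isClosed_Iic
  have hbdd : BddAbove S := ⟨s', fun t ht => ht.1.2⟩
  have hsS : sSup S ∈ S := hS.csSup_mem ⟨s₁, ⟨le_rfl, hs'S'.1.1⟩, h₁.le⟩ hbdd
  set s := sSup S
  have hus : u s = c := by
    obtain ⟨r, hr, hur⟩ := intermediate_value_Icc hsS.1.2
      (hu.mono (Icc_subset_Icc hsS.1.1 hs'S'.1.2)) ⟨hsS.2, hus'.ge.trans' hcd.le⟩
    have hrs : r ≤ s := le_csSup hbdd ⟨⟨hsS.1.1.trans hr.1, hr.2⟩, hur.le⟩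
    rwa [le_antisymm hrs hr.1] at hur
  have hss' : s < s' := lt_of_le_of_ne hsS.1.2 fun h => hcd.ne (hus ▸ h ▸ hus')
  refine ⟨s, s', hsS.1.1, hss', hus, hus', fun t ht => ⟨le_of_not_gt fun hut => ?_, ?_⟩⟩
  · have hts : t ≤ s := le_csSup hbdd ⟨⟨hsS.1.1.trans ht.1, ht.2.le⟩, hut.le⟩
    rw [le_antisymm hts ht.1, hus] at hut
    exact hut.false
  · exact hbefore t ⟨hsS.1.1.trans ht.1, ht.2.le.trans hs'S'.1.2⟩ ht.2

theorem ContinuousOn.forall_lt_or_forall_gt_of_forall_notMem_Icc {u : ℝ → ℝ} {T a b : ℝ}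
    (hu : ContinuousOn u (Ici T)) (hab : a ≤ b) (hout : ∀ t ∈ Ici T, u t ∉ Icc a b) :
    (∀ t ∈ Ici T, u t < a) ∨ ∀ t ∈ Ici T, b < u t := by
  have himage : u '' Ici T ⊆ Iio a ∪ Ioi b := by
    rintro _ ⟨t, ht, rfl⟩
    by_contra hin
    simp only [mem_union, mem_Iio, mem_Ioi, not_or, not_lt] at hin
    exact hout t ht hin
  exact ((isPreconnected_Ici.image u hu).subset_or_subset isOpen_Iio isOpen_Ioi
    (Iio_disjoint_Ioi_of_le hab) himage).imp (fun h t ht => h ⟨t, ht, rfl⟩)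
    fun h t ht => h ⟨t, ht, rfl⟩

theorem MapClusterPt.eq_of_tendsto_comp {α X Y : Type*} [TopologicalSpace X] [TopologicalSpace Y]
    [T2Space Y] {l : Filter α} {u : α → X} {f : X → Y} {L : X} {y : Y} (hL : MapClusterPt L l u)
    (hf : ContinuousAt f L) (h : Tendsto (f ∘ u) l (𝓝 y)) : f L = y :=
  eq_of_nhds_neBot ((hL.continuousAt_comp hf).clusterPt.mono h)

theorem exists_tendsto_of_mapClusterPt_mem_Icc {α : Type*} {l : Filter α} [NeBot l] {u : α → ℝ}
    {a b : ℝ} (hle : IsBoundedUnder (· ≤ ·) l u) (hge : IsBoundedUnder (· ≥ ·) l u)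
    (hcl : ∀ L, MapClusterPt L l u → L ∈ Icc a b)
    (hosc : ∀ c d, a ≤ c → c < d → d ≤ b → ¬ ((∃ᶠ t in l, u t < c) ∧ ∃ᶠ t in l, d < u t)) :
    ∃ L ∈ Icc a b, Tendsto u l (𝓝 L) := by
  have hA := hcl _ (MapClusterPt.liminf hle.isCoboundedUnder_ge hge)
  have hB := hcl _ (MapClusterPt.limsup hge.isCoboundedUnder_le hle)
  obtain hAB | hAB := (liminf_le_limsup hle hge).eq_or_lt
  · exact ⟨_, hB, tendsto_of_liminf_eq_limsup hAB rfl hle hge⟩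
  · set A := liminf u l
    set B := limsup u l
    refine absurd ⟨frequently_lt_of_liminf_lt hle.isCoboundedUnder_ge ?_,
      frequently_lt_of_lt_limsup hge.isCoboundedUnder_le ?_⟩
      (hosc ((2 * A + B) / 3) ((A + 2 * B) / 3) ?_ ?_ ?_) <;> linarith [hA.1, hB.2]

theorem not_tendsto_zero_of_forcing {φ v v' g : ℝ → ℝ} {c T : ℝ} (hφ : ContinuousAt φ 0)
    (hφ0 : φ 0 = 0) (hc : 0 < c) (hv : ∀ t ∈ Ici T, HasDerivWithinAt v (v' t) (Ici T) t)
    (hode : ∀ t ∈ Ici T, v' t + φ (v t) = g t) (hg : ∀ t ∈ Ici T, c ≤ g t) :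
    ¬ Tendsto v atTop (𝓝 0) := by
  intro hv0
  have hφv : ∀ᶠ t in atTop, φ (v t) < c / 2 :=
    (hφ0 ▸ hφ.tendsto.comp hv0).eventually (eventually_lt_nhds (half_pos hc))
  obtain ⟨T', hT'⟩ := eventually_atTop.1 (hφv.and (eventually_ge_atTop T))
  have hsub : Ici T' ⊆ Ici T := Ici_subset_Ici.2 (hT' T' le_rfl).2
  have hlin : ∀ t ≥ T', v T' + c / 2 * (t - T') ≤ v t := fun t ht => by
    have := (convex_Ici T').image_sub_le_mul_sub_of_hasDerivWithinAt_le (g := fun t => -v t)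
      (C := -(c / 2)) (fun s hs => ((hv s (hsub hs)).mono hsub).neg) (fun s hs => ?_)
      self_mem_Ici ht ht
    · linarith
    · have hs' : T' ≤ s := interior_subset hs
      linarith [hode s (hsub hs'), hg s (hsub hs'), (hT' s hs').1]
  have hlin_top : Tendsto (fun t => v T' + c / 2 * (t - T')) atTop atTop :=
    tendsto_atTop_add_const_left _ _
      ((tendsto_atTop_add_const_right _ _ tendsto_id).const_mul_atTop (half_pos hc))
  exact not_tendsto_nhds_of_tendsto_atTop
    (tendsto_atTop_mono' _ (eventually_atTop.2 ⟨T', hlin⟩) hlin_top) 0 hv0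

theorem continuous_abs_rpow_sub_two_mul {p : ℝ} (hp : 2 ≤ p) :
    Continuous fun v : ℝ => |v| ^ (p - 2) * v :=
  ((Real.continuous_rpow_const (by linarith)).comp continuous_abs).mul continuous_id

theorem mul_abs_rpow_sub_two_mul {p : ℝ} (hp : p ≠ 0) (v : ℝ) :
    v * (|v| ^ (p - 2) * v) = |v| ^ p := by
  rcases eq_or_ne v 0 with rfl | hv
  · simp [Real.zero_rpow hp]
  · calc v * (|v| ^ (p - 2) * v) = |v| ^ (p - 2) * |v| ^ (2 : ℝ) := by
          rw [Real.rpow_two, sq_abs]; ring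
      _ = |v| ^ p := by rw [← Real.rpow_add (abs_pos.2 hv)]; norm_num

theorem sub_le_of_free_damped_motion {p s s' : ℝ} {x x' x'' : ℝ → ℝ} (hp : p < 3) (hss' : s ≤ s')
    (hx : ContinuousOn x (Icc s s')) (hx' : ContinuousOn x' (Icc s s'))
    (hxd : ∀ t ∈ Ioo s s', HasDerivAt x (x' t) t) (hx'd : ∀ t ∈ Ioo s s', HasDerivAt x' (x'' t) t)
    (hode : ∀ t ∈ Ioo s s', x'' t = -(|x' t| ^ (p - 2) * x' t))
    (hne : ∀ t ∈ Ioo s s', x' t ≠ 0) :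
    x s' - x s ≤ |x' s| ^ (3 - p) / (3 - p) := by
  have hq : 0 < 3 - p := by linarith
  have hG : AntitoneOn (fun t => x t + |x' t| ^ (3 - p) / (3 - p)) (Icc s s') := by
    refine antitoneOn_of_hasDerivWithinAt_nonpos (convex_Icc s s') (f' := fun t => x' t - |x' t|)
      (hx.add ((((Real.continuous_rpow_const hq.le).comp continuous_abs).comp_continuousOn
        hx').div_const _)) (fun t ht => ?_) (fun t _ => sub_nonpos.2 (le_abs_self _))
    rw [interior_Icc] at ht ⊢
    have hpow := (((hasDerivAt_abs (hne t ht)).comp t (hx'd t ht)).rpow_const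
      (p := 3 - p) (Or.inl (abs_ne_zero.2 (hne t ht)))).div_const (3 - p)
    -- `|v|^{3-p}/(3-p)` has derivative `sign v · v'' · |v|^{2-p} = -|v|` along the motion
    refine (((hxd t ht).add hpow).congr_deriv ?_).hasDerivWithinAt
    simp only [Function.comp_apply]
    rw [hode t ht, show 3 - p - 1 = 2 - p by ring]
    have hinv : |x' t| ^ (p - 2) * |x' t| ^ (2 - p) = 1 := by
      rw [← Real.rpow_add (abs_pos.2 (hne t ht)), show p - 2 + (2 - p) = 0 by ring, Real.rpow_zero]
    have hsign := sign_mul_self (x' t)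
    rw [mul_div_right_comm, mul_div_cancel_right₀ _ hq.ne']
    linear_combination (-(SignType.sign (x' t) : ℝ) * x' t) * hinv - hsign
  have h := hG ⟨le_rfl, hss'⟩ ⟨hss', le_rfl⟩ hss'
  have : 0 ≤ |x' s'| ^ (3 - p) / (3 - p) := by positivity
  simp only at h
  linarith

structure IsDampedSolution (f : ℝ → ℝ) (p : ℝ) (x x' x'' : ℝ → ℝ) : Prop where
  hasDerivWithinAt : ∀ t ∈ Ici (0 : ℝ), HasDerivWithinAt x (x' t) (Ici 0) t
  hasDerivWithinAt_vel : ∀ t ∈ Ici (0 : ℝ), HasDerivWithinAt x' (x'' t) (Ici 0) t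
  ode : ∀ t ∈ Ici (0 : ℝ), x'' t + |x' t| ^ (p - 2) * x' t + deriv f (x t) = 0

def mechanicalEnergy (f x x' : ℝ → ℝ) (t : ℝ) : ℝ := f (x t) + x' t ^ 2 / 2

theorem min_le_mechanicalEnergy {f x x' : ℝ → ℝ} {m : ℝ} (hmin : ∀ y, m ≤ f y) (t : ℝ) :
    m ≤ mechanicalEnergy f x x' t := by
  unfold mechanicalEnergy
  linarith [hmin (x t), sq_nonneg (x' t)]

namespace IsDampedSolution

variable {f x x' x'' : ℝ → ℝ} {p : ℝ}

theorem continuousOn (hsol : IsDampedSolution f p x x' x'') : ContinuousOn x (Ici 0) :=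
  fun t ht => (hsol.hasDerivWithinAt t ht).continuousWithinAt

theorem continuousOn_vel (hsol : IsDampedSolution f p x x' x'') : ContinuousOn x' (Ici 0) :=
  fun t ht => (hsol.hasDerivWithinAt_vel t ht).continuousWithinAt

theorem hasDerivAt (hsol : IsDampedSolution f p x x' x'') {t : ℝ} (ht : 0 < t) :
    HasDerivAt x (x' t) t :=
  (hsol.hasDerivWithinAt t ht.le).hasDerivAt (Ici_mem_nhds ht)

theorem hasDerivAt_vel (hsol : IsDampedSolution f p x x' x'') {t : ℝ} (ht : 0 < t) :
    HasDerivAt x' (x'' t) t :=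
  (hsol.hasDerivWithinAt_vel t ht.le).hasDerivAt (Ici_mem_nhds ht)

theorem hasDerivWithinAt_energy (hsol : IsDampedSolution f p x x' x'') (hf : Differentiable ℝ f)
    (hp : p ≠ 0) {t : ℝ} (ht : t ∈ Ici 0) :
    HasDerivWithinAt (mechanicalEnergy f x x') (-|x' t| ^ p) (Ici 0) t := by
  refine (((hf (x t)).hasDerivAt.comp_hasDerivWithinAt t (hsol.hasDerivWithinAt t ht)).add
    (((hsol.hasDerivWithinAt_vel t ht).pow 2).div_const 2)).congr_deriv ?_
  linear_combination x' t * hsol.ode t ht - mul_abs_rpow_sub_two_mul hp (x' t)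

theorem antitoneOn_energy (hsol : IsDampedSolution f p x x' x'') (hf : Differentiable ℝ f)
    (hp : p ≠ 0) : AntitoneOn (mechanicalEnergy f x x') (Ici 0) :=
  (convex_Ici 0).antitoneOn_of_hasDerivWithinAt_nonpos
    (fun _ ht => hsol.hasDerivWithinAt_energy hf hp ht) fun t _ => by
      simpa using Real.rpow_nonneg (abs_nonneg (x' t)) p

theorem exists_tendsto_energy (hsol : IsDampedSolution f p x x' x'') (hf : Differentiable ℝ f)
    (hp : p ≠ 0) {m : ℝ} (hmin : ∀ y, m ≤ f y) :
    ∃ e, Tendsto (mechanicalEnergy f x x') atTop (𝓝 e) :=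
  exists_tendsto_of_antitoneOn_Ici (hsol.antitoneOn_energy hf hp) fun t _ =>
    min_le_mechanicalEnergy hmin t

theorem exists_abs_le (hsol : IsDampedSolution f p x x' x'') (hf : Differentiable ℝ f) (hp : p ≠ 0)
    (hcoercive : Tendsto f (cocompact ℝ) atTop) : ∃ R, ∀ t ∈ Ici (0 : ℝ), |x t| ≤ R := by
  obtain ⟨R, hR⟩ := isBounded_iff_forall_norm_le.1
    (isBounded_setOf_le_of_tendsto_cocompact hcoercive (mechanicalEnergy f x x' 0))
  refine ⟨R, fun t ht => hR (x t) ?_⟩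
  have := hsol.antitoneOn_energy hf hp self_mem_Ici ht ht
  unfold mechanicalEnergy at this ⊢
  show f (x t) ≤ _
  linarith [sq_nonneg (x' t)]

theorem exists_abs_vel_le (hsol : IsDampedSolution f p x x' x'') (hf : Differentiable ℝ f)
    (hp : p ≠ 0) {m : ℝ} (hmin : ∀ y, m ≤ f y) : ∃ V, ∀ t ∈ Ici (0 : ℝ), |x' t| ≤ V := by
  refine ⟨√(2 * (mechanicalEnergy f x x' 0 - m)), fun t ht => Real.abs_le_sqrt ?_⟩
  have := hsol.antitoneOn_energy hf hp self_mem_Ici ht ht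
  unfold mechanicalEnergy at this ⊢
  linarith [hmin (x t)]

theorem exists_abs_acc_le (hsol : IsDampedSolution f p x x' x'') (hp : 2 ≤ p)
    (hf' : Continuous (deriv f)) {R V : ℝ} (hR : ∀ t ∈ Ici (0 : ℝ), |x t| ≤ R)
    (hV : ∀ t ∈ Ici (0 : ℝ), |x' t| ≤ V) : ∃ K, 0 < K ∧ ∀ t ∈ Ici (0 : ℝ), |x'' t| ≤ K := by
  obtain ⟨M₁, hM₁⟩ := (isCompact_Icc (a := -V) (b := V)).exists_bound_of_continuousOn
    (continuous_abs_rpow_sub_two_mul hp).continuousOn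
  obtain ⟨M₂, hM₂⟩ := (isCompact_Icc (a := -R) (b := R)).exists_bound_of_continuousOn
    hf'.continuousOn
  refine ⟨|M₁| + |M₂| + 1, by positivity, fun t ht => ?_⟩
  have h₁ : |(|x' t| ^ (p - 2) * x' t)| ≤ M₁ := hM₁ _ (abs_le.1 (hV t ht))
  have h₂ : |deriv f (x t)| ≤ M₂ := hM₂ _ (abs_le.1 (hR t ht))
  rw [show x'' t = -(|x' t| ^ (p - 2) * x' t) - deriv f (x t) by linarith [hsol.ode t ht]]
  linarith [abs_sub (-(|x' t| ^ (p - 2) * x' t)) (deriv f (x t)), abs_neg (|x' t| ^ (p - 2) * x' t),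
    le_abs_self M₁, le_abs_self M₂]

theorem mul_rpow_le_energy_sub (hsol : IsDampedSolution f p x x' x'') (hf : Differentiable ℝ f)
    (hp : 0 < p) {K ε δ t : ℝ} (hK : ∀ u ∈ Ici (0 : ℝ), |x'' u| ≤ K) (ht : 0 ≤ t) (hδ : 0 ≤ δ)
    (hKδ : K * δ ≤ ε / 2) (hε : ε ≤ |x' t|) :
    δ * (ε / 2) ^ p ≤ mechanicalEnergy f x x' t - mechanicalEnergy f x x' (t + δ) := by
  have hsub : Icc t (t + δ) ⊆ Ici 0 := fun u hu => ht.trans hu.1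
  have hK0 : 0 ≤ K := (abs_nonneg _).trans (hK t ht)
  have hε0 : 0 ≤ ε / 2 := (mul_nonneg hK0 hδ).trans hKδ
  have hslow : ∀ u ∈ Icc t (t + δ), ε / 2 ≤ |x' u| := fun u hu => by
    have h := norm_image_sub_le_of_norm_deriv_le_segment'
      (fun v hv => (hsol.hasDerivWithinAt_vel v (hsub hv)).mono hsub)
      (fun v hv => hK v (hsub (Ico_subset_Icc_self hv))) u hu
    rw [Real.norm_eq_abs] at h
    nlinarith [abs_sub_abs_le_abs_sub (x' t) (x' u), abs_sub_comm (x' u) (x' t), hu.2]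
  have h := (convex_Icc t (t + δ)).image_sub_le_mul_sub_of_hasDerivWithinAt_le
    (fun u hu => (hsol.hasDerivWithinAt_energy hf hp.ne' (hsub hu)).mono hsub)
    (fun u hu => neg_le_neg (Real.rpow_le_rpow hε0 (hslow u (interior_subset hu)) hp.le))
    (left_mem_Icc.2 (by linarith)) (right_mem_Icc.2 (by linarith)) (by linarith)
  rw [add_sub_cancel_left] at h
  linarith

theorem tendsto_vel_zero (hsol : IsDampedSolution f p x x' x'') (hf : Differentiable ℝ f)
    (hp : 0 < p) {K e : ℝ} (hK0 : 0 < K) (hK : ∀ t ∈ Ici (0 : ℝ), |x'' t| ≤ K)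
    (he : Tendsto (mechanicalEnergy f x x') atTop (𝓝 e)) : Tendsto x' atTop (𝓝 0) := by
  refine Metric.tendsto_nhds.2 fun ε hε => ?_
  set δ := ε / (2 * K)
  have hKδ : K * δ = ε / 2 := by simp only [δ]; field_simp
  have hdrop : Tendsto (fun t => mechanicalEnergy f x x' t - mechanicalEnergy f x x' (t + δ))
      atTop (𝓝 0) := by
    simpa using he.sub (he.comp (tendsto_atTop_add_const_right _ δ tendsto_id))
  filter_upwards [hdrop.eventually (eventually_lt_nhds (by positivity : 0 < δ * (ε / 2) ^ p)),
    eventually_ge_atTop 0] with t hsmall ht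
  rw [Real.dist_0_eq_abs]
  by_contra! hεt
  exact (hsol.mul_rpow_le_energy_sub hf hp hK ht (by positivity) hKδ.le hεt).not_gt hsmall

theorem eq_min_of_tendsto_comp (hsol : IsDampedSolution f p x x' x'') (hp : 2 ≤ p)
    (hf : Differentiable ℝ f) (hconv : ConvexOn ℝ univ f) {a b R e : ℝ} (hab : a ≤ b)
    (hmin : Icc a b ⊆ {z | ∀ y, f z ≤ f y}) (hR : ∀ t ∈ Ici (0 : ℝ), |x t| ≤ R)
    (hv : Tendsto x' atTop (𝓝 0)) (he : Tendsto (fun t => f (x t)) atTop (𝓝 e)) : e = f a := by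
  have hfa : ∀ y, f a ≤ f y := hmin ⟨le_rfl, hab⟩
  refine le_antisymm (not_lt.1 fun hlt => ?_) (ge_of_tendsto' he fun t => hfa _)
  obtain ⟨T, hT⟩ := eventually_atTop.1 ((he.eventually
    (eventually_gt_nhds (by linarith : (f a + e) / 2 < e))).and (eventually_ge_atTop 0))
  have hT0 : 0 ≤ T := (hT T le_rfl).2
  have hsub : Ici T ⊆ Ici 0 := Ici_subset_Ici.2 hT0
  have hR0 : 0 ≤ R := (abs_nonneg _).trans (hR T hT0)
  set D := R + |a| + |b| + 1
  have hD : 0 < D := by positivity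
  have hout : ∀ t ∈ Ici T, x t ∉ Icc a b := fun t ht hin => by
    linarith [(hT t ht).1, hmin hin a]
  have hφ := (continuous_abs_rpow_sub_two_mul hp).continuousAt (x := 0)
  have hφ0 : |(0 : ℝ)| ^ (p - 2) * 0 = 0 := mul_zero _
  have hvel : ∀ t ∈ Ici T, HasDerivWithinAt x' (x'' t) (Ici T) t := fun t ht =>
    (hsol.hasDerivWithinAt_vel t (hsub ht)).mono hsub
  have hc : 0 < (e - f a) / 2 / D := by have := sub_pos.2 hlt; positivity
  rcases (hsol.continuousOn.mono hsub).forall_lt_or_forall_gt_of_forall_notMem_Icc hab hout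
    with hleft | hright
  · refine not_tendsto_zero_of_forcing hφ hφ0 hc hvel
      (g := fun t => -deriv f (x t)) (fun t ht => by linarith [hsol.ode t (hsub ht)])
      (fun t ht => ?_) hv
    have hxa := hleft t ht
    have hxR := abs_le.1 (hR t (hsub ht))
    have htan := hconv.sub_le_deriv_mul_sub (mem_univ _) (mem_univ a) (hf (x t))
    rw [div_le_iff₀ hD]
    nlinarith [(hT t ht).1, le_abs_self a, abs_nonneg b]
  · refine not_tendsto_zero_of_forcing (v := fun t => -x' t) hφ hφ0 hc
      (fun t ht => (hvel t ht).neg) (g := fun t => deriv f (x t))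
      (fun t ht => by simp only [abs_neg]; linarith [hsol.ode t (hsub ht)])
      (fun t ht => ?_) (by simpa using hv.neg)
    have hxb := hright t ht
    have hxR := abs_le.1 (hR t (hsub ht))
    have htan := hconv.sub_le_deriv_mul_sub (mem_univ _) (mem_univ b) (hf (x t))
    rw [div_le_iff₀ hD]
    nlinarith [(hT t ht).1, neg_abs_le b, abs_nonneg a, hmin ⟨hab, le_rfl⟩ a, hfa b]

/-- While `f' ∘ x` vanishes the velocity cannot come back from `0`, so a solution that first
reaches `x s'` at time `s'` moves without stopping and obeys the free damped law. -/
theorem sub_le_of_deriv_eq_zero (hsol : IsDampedSolution f p x x' x'') (hp : p ≠ 0) (hp3 : p < 3)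
    {s s' : ℝ} (hs : 0 ≤ s) (hss' : s < s') (hflat : ∀ t ∈ Icc s s', deriv f (x t) = 0)
    (hlt : ∀ t ∈ Ico s s', x t < x s') : x s' - x s ≤ |x' s| ^ (3 - p) / (3 - p) := by
  have hsub : Icc s s' ⊆ Ici 0 := fun u hu => hs.trans hu.1
  have hfree : ∀ t ∈ Icc s s', x'' t = -(|x' t| ^ (p - 2) * x' t) := fun t ht => by
    linarith [hsol.ode t (hsub ht), hflat t ht]
  have hkin : AntitoneOn (fun t => x' t ^ 2) (Icc s s') :=
    (convex_Icc s s').antitoneOn_of_hasDerivWithinAt_nonpos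
      (fun t ht => ((hsol.hasDerivWithinAt_vel t (hsub ht)).mono hsub).pow 2) fun t ht => by
        have ht' := interior_subset ht
        rw [hfree t ht']
        norm_num
        linarith [mul_abs_rpow_sub_two_mul hp (x' t), Real.rpow_nonneg (abs_nonneg (x' t)) p]
  have hne : ∀ t ∈ Ioo s s', x' t ≠ 0 := by
    intro t ht h0
    have hstop : ∀ u ∈ Icc t s', x' u = 0 := fun u hu => by
      have := hkin ⟨ht.1.le, ht.2.le⟩ ⟨ht.1.le.trans hu.1, hu.2⟩ hu.1
      simp only [h0] at this
      nlinarith [sq_nonneg (x' u)]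
    have hconst := constant_of_has_deriv_right_zero
      (hsol.continuousOn.mono fun u hu => hs.trans (ht.1.le.trans hu.1))
      (fun u hu => hstop u (Ico_subset_Icc_self hu) ▸
        (hsol.hasDerivWithinAt u (hs.trans (ht.1.le.trans hu.1))).mono
          (Ici_subset_Ici.2 (hs.trans (ht.1.le.trans hu.1))))
      s' ⟨ht.2.le, le_rfl⟩
    exact (hlt t ⟨ht.1.le, ht.2⟩).ne hconst.symm
  have hpos : ∀ t ∈ Ioo s s', 0 < t := fun t ht => hs.trans_lt ht.1
  exact sub_le_of_free_damped_motion hp3 hss'.le (hsol.continuousOn.mono hsub)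
    (hsol.continuousOn_vel.mono hsub) (fun t ht => hsol.hasDerivAt (hpos t ht))
    (fun t ht => hsol.hasDerivAt_vel (hpos t ht)) (fun t ht => hfree t (Ioo_subset_Icc_self ht))
    hne

theorem not_frequently_lt_and_frequently_gt (hsol : IsDampedSolution f p x x' x'') (hp : p ≠ 0)
    (hp3 : p < 3) {c d : ℝ} (hflat : ∀ z ∈ Icc c d, deriv f z = 0) (hcd : c < d)
    (hv : Tendsto x' atTop (𝓝 0)) : ¬ ((∃ᶠ t in atTop, x t < c) ∧ ∃ᶠ t in atTop, d < x t) := by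
  rintro ⟨hlow, hhigh⟩
  have hq : 0 < 3 - p := by linarith
  have hψ : Tendsto (fun v : ℝ => |v| ^ (3 - p) / (3 - p)) (𝓝 0) (𝓝 0) := by
    simpa [Real.zero_rpow hq.ne'] using
      (((Real.continuous_rpow_const hq.le).comp continuous_abs).div_const (3 - p)).tendsto 0
  obtain ⟨T, hT⟩ := eventually_atTop.1
    (((hψ.comp hv).eventually (eventually_lt_nhds (sub_pos.2 hcd))).and (eventually_ge_atTop 0))
  obtain ⟨s₁, hs₁, hs₁T⟩ := (hlow.and_eventually (eventually_ge_atTop T)).exists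
  obtain ⟨s₂, hs₂, hs₂s₁⟩ := (hhigh.and_eventually (eventually_ge_atTop s₁)).exists
  obtain ⟨s, s', hs₁s, hss', hxs, hxs', hrange⟩ := exists_crossing hs₂s₁
    (hsol.continuousOn.mono fun u hu => (hT T le_rfl).2.trans (hs₁T.trans hu.1)) hcd hs₁ hs₂
  have hsT : T ≤ s := hs₁T.trans hs₁s
  have hmaps : ∀ t ∈ Icc s s', x t ∈ Icc c d := fun t ht => by
    rcases ht.2.eq_or_lt with rfl | hlt
    · rw [hxs']
      exact ⟨hcd.le, le_rfl⟩
    · exact Ico_subset_Icc_self (hrange t ⟨ht.1, hlt⟩)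
  have h := hsol.sub_le_of_deriv_eq_zero hp hp3 (hT s hsT).2 hss' (fun t ht => hflat _ (hmaps t ht))
    fun t ht => hxs' ▸ (hrange t ht).2
  rw [hxs, hxs'] at h
  exact h.not_gt (hT s hsT).1

end IsDampedSolution

theorem strong_damping_convergence_general
    (f : ℝ → ℝ) (hf : ContDiff ℝ 1 f) (hconv : ConvexOn ℝ Set.univ f)
    (hcoercive : Tendsto f (cocompact ℝ) atTop)
    (a b : ℝ) (hab : a < b)
    (hargmin : {z : ℝ | ∀ y, f z ≤ f y} = Set.Icc a b)
    (p : ℝ) (hp2 : 2 ≤ p) (hp3 : p < 3)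
    (x x' x'' : ℝ → ℝ)
    (hx : ∀ t ∈ Set.Ici (0:ℝ), HasDerivWithinAt x (x' t) (Set.Ici 0) t)
    (hx' : ∀ t ∈ Set.Ici (0:ℝ), HasDerivWithinAt x' (x'' t) (Set.Ici 0) t)
    (heq : ∀ t ∈ Set.Ici (0:ℝ),
        x'' t + |x' t| ^ (p - 2) * x' t + deriv f (x t) = 0) :
    ∃ L ∈ Set.Icc a b, Tendsto x atTop (𝓝 L) := by
  have hsol : IsDampedSolution f p x x' x'' := ⟨hx, hx', heq⟩
  have hfd : Differentiable ℝ f := hf.differentiable one_ne_zero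
  have hp : 0 < p := by linarith
  have hfa : ∀ y, f a ≤ f y := hargmin.ge ⟨le_rfl, hab.le⟩
  obtain ⟨e, he⟩ := hsol.exists_tendsto_energy hfd hp.ne' hfa
  obtain ⟨R, hR⟩ := hsol.exists_abs_le hfd hp.ne' hcoercive
  obtain ⟨V, hV⟩ := hsol.exists_abs_vel_le hfd hp.ne' hfa
  obtain ⟨K, hK0, hK⟩ := hsol.exists_abs_acc_le hp2 (hf.continuous_deriv le_rfl) hR hV
  have hv : Tendsto x' atTop (𝓝 0) := hsol.tendsto_vel_zero hfd hp hK0 hK he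
  have hfx : Tendsto (fun t => f (x t)) atTop (𝓝 e) := by
    simpa [mechanicalEnergy] using he.sub ((hv.pow 2).div_const 2)
  have hem : e = f a := hsol.eq_min_of_tendsto_comp hp2 hfd hconv hab.le hargmin.ge hR hv hfx
  have hbdd := isBoundedUnder_le_abs.1 (isBoundedUnder_of_eventually_le (a := R)
    (eventually_atTop.2 ⟨0, hR⟩))
  have hcl : ∀ L, MapClusterPt L atTop x → L ∈ Icc a b := fun L hL => hargmin ▸ fun y =>
    (hL.eq_of_tendsto_comp hfd.continuous.continuousAt (hem ▸ hfx)).trans_le (hfa y)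
  have hflat : ∀ z ∈ Icc a b, deriv f z = 0 := fun z hz =>
    IsLocalMin.deriv_eq_zero (Eventually.of_forall (hargmin.ge hz))
  exact exists_tendsto_of_mapClusterPt_mem_Icc hbdd.1 hbdd.2 hcl fun c d hac hcd hdb =>
    hsol.not_frequently_lt_and_frequently_gt hp.ne' hp3
      (fun z hz => hflat z ⟨hac.trans hz.1, hz.2.trans hdb⟩) hcd hv

/-- **Convergence under sufficiently strong damping (Proposition 6.4).**
Let `f : ℝ → ℝ` be convex, `C¹`, coercive, with `argmin f = [a,b]`, `a < b`.
For `2 ≤ p < 3`, every `C²` solution on `[0,∞)` of `ẍ + |ẋ|^{p-2} ẋ + f'(x) = 0`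
converges as `t → ∞`, and its limit belongs to `[a,b]`. -/
theorem strong_damping_convergence
    (f : ℝ → ℝ) (hf : ContDiff ℝ 1 f) (hconv : ConvexOn ℝ Set.univ f)
    (hcoercive : Tendsto f (cocompact ℝ) atTop)
    (a b : ℝ) (hab : a < b)
    (hargmin : {z : ℝ | ∀ y, f z ≤ f y} = Set.Icc a b)
    (p : ℝ) (hp2 : 2 ≤ p) (hp3 : p < 3)
    (x x' x'' : ℝ → ℝ)
    (hx : ∀ t ∈ Set.Ici (0:ℝ), HasDerivWithinAt x (x' t) (Set.Ici 0) t)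
    (hx' : ∀ t ∈ Set.Ici (0:ℝ), HasDerivWithinAt x' (x'' t) (Set.Ici 0) t)
    (hx''c : ContinuousOn x'' (Set.Ici 0))
    (heq : ∀ t ∈ Set.Ici (0:ℝ),
        x'' t + |x' t| ^ (p - 2) * x' t + deriv f (x t) = 0) :
    ∃ L ∈ Set.Icc a b, Tendsto x atTop (𝓝 L) :=
  strong_damping_convergence_general f hf hconv hcoercive a b hab hargmin p hp2 hp3 x x' x'' hx hx'
    heq
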